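/- arXiv:2106.01509 — 2 statements merged into one kernel-verified Lean document; each statement's English description precedes it below -/
import Mathlib

section
/- Let d be a prime and let f ∈ ℂ[X] be a nonzero polynomial of degree less than d. Then the number of complex d-th roots of unity z (i.e. z^d = 1) with f(z) = 0 is at most δ(f) − 1, where δ(f) denotes the number of nonzero coefficients of f. -/
/-!
Chebotarev's theorem: if `ζ` is a primitive `p`-th root of unity, `p` prime, every square
submatrix `(ζ ^ (a i * b j))` of the Fourier matrix, with the `a i` distinct mod `p` and the `b j`
distinct mod `p`, is nonsingular. A polynomial with `s` nonzero coefficients, at exponents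
`a i < p`, that vanished at `s` distinct roots of unity `ζ ^ b j` would have its coefficient
vector in the kernel of such a submatrix.

Chebotarev's theorem is proved in `ℤ[ζ] = ℤ[X]/(Φ_p)`. A kernel vector `c` gives
`F = ∑ c i X ^ a i` vanishing at every `ζ ^ b j`, so `∏ (X - ζ ^ b j) ∣ F`. Modulo `ζ - 1`, where
`ℤ[ζ]/(ζ - 1) = 𝔽_p`, this becomes `(X - 1) ^ s ∣ ∑ c̄ i X ^ a i`; applying `(X d/dX) ^ m` for
`m < s` and evaluating at `1` gives the Vandermonde system `∑ c̄ i a i ^ m = 0`, so `ζ - 1`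
divides every `c i`. Dividing by `ζ - 1` and repeating puts each `c i` in `⋂ (ζ - 1) ^ k`,
which is `0` by Krull's intersection theorem.
-/

open Polynomial Matrix

namespace Polynomial

section XMulDerivative

variable {R : Type*} [CommSemiring R]

theorem X_mul_derivative_C_mul_X_pow (e : R) (n : ℕ) :
    X * derivative (C e * X ^ n) = C (e * n) * X ^ n := by
  cases n with
  | zero => simp
  | succ n => rw [derivative_C_mul_X_pow, Nat.add_sub_cancel, ← mul_assoc, mul_comm X, mul_assoc,
      ← pow_succ']

theorem iterate_X_mul_derivative_sum_C_mul_X_pow {ι : Type*} [Fintype ι] (e : ι → R)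
    (a : ι → ℕ) (m : ℕ) :
    (fun g : R[X] => X * derivative g)^[m] (∑ i, C (e i) * X ^ a i) =
      ∑ i, C (e i * (a i : R) ^ m) * X ^ a i := by
  induction m with
  | zero => simp
  | succ m ih =>
    simp only [Function.iterate_succ_apply', ih, derivative_sum, Finset.mul_sum,
      X_mul_derivative_C_mul_X_pow, pow_succ, mul_assoc]

theorem pow_sub_dvd_iterate_X_mul_derivative_of_pow_dvd {p q : R[X]} {n : ℕ} (m : ℕ)
    (h : q ^ n ∣ p) : q ^ (n - m) ∣ (fun g : R[X] => X * derivative g)^[m] p := by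
  induction m with
  | zero => simpa
  | succ m ih =>
    rw [Nat.sub_succ, Function.iterate_succ_apply']
    exact (pow_sub_one_dvd_derivative_of_pow_dvd ih).mul_left X

end XMulDerivative

theorem eq_zero_of_X_sub_one_pow_dvd_sum_C_mul_X_pow {k : Type*} [Field k] {s : ℕ}
    {a : Fin s → ℕ} (ha : Function.Injective fun i => (a i : k)) {e : Fin s → k}
    (h : (X - 1 : k[X]) ^ s ∣ ∑ i, C (e i) * X ^ a i) : e = 0 := by
  refine Matrix.eq_zero_of_forall_pow_sum_mul_pow_eq_zero ha fun m => ?_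
  have hdvd : X - C 1 ∣ ∑ i, C (e i * (a i : k) ^ (m : ℕ)) * X ^ a i := by
    rw [← iterate_X_mul_derivative_sum_C_mul_X_pow, C_1]
    exact (dvd_pow_self _ (by omega)).trans (pow_sub_dvd_iterate_X_mul_derivative_of_pow_dvd m h)
  simpa [eval_finsetSum] using dvd_iff_isRoot.mp hdvd

theorem prod_X_sub_C_dvd_of_forall_isRoot {R : Type*} [CommRing R] [IsDomain R] {ι : Type*}
    [Fintype ι] {w : ι → R} (hw : Function.Injective w) {p : R[X]} (h : ∀ i, p.IsRoot (w i)) :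
    ∏ i, (X - C (w i)) ∣ p := by
  rcases eq_or_ne p 0 with rfl | hp
  · exact dvd_zero _
  rw [Finset.prod_eq_multiset_prod, show (fun i => X - C (w i)) = (fun x => X - C x) ∘ w from rfl,
    ← Multiset.map_map, Multiset.prod_X_sub_C_dvd_iff_le_roots hp,
    Multiset.le_iff_subset (Multiset.Nodup.map hw Finset.univ.nodup)]
  intro x hx
  obtain ⟨i, -, rfl⟩ := Multiset.mem_map.mp hx
  exact (mem_roots hp).mpr (h i)

end Polynomial

theorem IsPrimitiveRoot.injective_pow_comp {M : Type*} [CommMonoid M] {ζ : M} {k : ℕ} [NeZero k]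
    (hζ : IsPrimitiveRoot ζ k) {ι : Type*} {b : ι → ℕ}
    (hb : Function.Injective fun j => (b j : ZMod k)) : Function.Injective fun j => ζ ^ b j :=
  fun j j' h => by
    have h' := ((hζ.isOfFinOrder (NeZero.ne k)).pow_eq_pow_iff_modEq).mp h
    rw [← hζ.eq_orderOf] at h'
    exact hb ((ZMod.natCast_eq_natCast_iff _ _ _).mpr h')

theorem ZMod.injective_natCast_comp {ι : Type*} {p : ℕ} {u : ι → ℕ}
    (hu : Function.Injective u) (hup : ∀ i, u i < p) :
    Function.Injective fun i => (u i : ZMod p) := fun _ _ h =>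
  hu (CharP.natCast_injOn_Iio (ZMod p) p (hup _) (hup _) h)

def Matrix.powMul {ι R : Type*} [Monoid R] (x : R) (a b : ι → ℕ) : Matrix ι ι R :=
  Matrix.of fun i j => x ^ (a i * b j)

@[simp]
theorem RingHom.mapMatrix_powMul {ι R S : Type*} [Fintype ι] [DecidableEq ι] [Semiring R]
    [Semiring S] (f : R →+* S) (x : R) (a b : ι → ℕ) :
    f.mapMatrix (Matrix.powMul x a b) = Matrix.powMul (f x) a b := by
  ext i j
  simp [Matrix.powMul]

theorem Matrix.vecMul_powMul_apply {ι R : Type*} [Fintype ι] [CommSemiring R] (x : R)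
    (a b : ι → ℕ) (c : ι → R) (j : ι) :
    (c ᵥ* Matrix.powMul x a b) j = (∑ i, C (c i) * X ^ a i).eval (x ^ b j) := by
  simp [Matrix.vecMul, dotProduct, Matrix.powMul, eval_finsetSum, pow_mul']

noncomputable section

abbrev CyclotomicIntegers (p : ℕ) : Type := AdjoinRoot (cyclotomic p ℤ)

namespace CyclotomicIntegers

variable (p : ℕ)

abbrev zeta : CyclotomicIntegers p := AdjoinRoot.root (cyclotomic p ℤ)

instance [NeZero p] : IsDomain (CyclotomicIntegers p) :=
  AdjoinRoot.isDomain_of_prime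
    (UniqueFactorizationMonoid.irreducible_iff_prime.mp (cyclotomic.irreducible (NeZero.pos p)))

instance : IsNoetherianRing (CyclotomicIntegers p) :=
  inferInstanceAs (IsNoetherianRing (ℤ[X] ⧸ Ideal.span {cyclotomic p ℤ}))

theorem zeta_sub_one_dvd_mk_sub_eval_one (Q : ℤ[X]) :
    zeta p - 1 ∣ AdjoinRoot.mk _ Q - ((Q.eval 1 : ℤ) : CyclotomicIntegers p) := by
  simpa using map_dvd (AdjoinRoot.mk (cyclotomic p ℤ)) (X_sub_C_dvd_sub_C_eval (a := 1) (p := Q))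

section Reduction

variable [Fact p.Prime]

def toZMod : CyclotomicIntegers p →+* ZMod p :=
  AdjoinRoot.lift (Int.castRingHom (ZMod p)) 1 (by
    rw [eval₂_eq_eval_map, map_cyclotomic, eval_one_cyclotomic_prime, ZMod.natCast_self])

@[simp]
theorem toZMod_zeta : toZMod p (zeta p) = 1 :=
  AdjoinRoot.lift_root _

theorem zeta_sub_one_dvd_of_toZMod_eq_zero {x : CyclotomicIntegers p} (hx : toZMod p x = 0) :
    zeta p - 1 ∣ x := by
  obtain ⟨Q, rfl⟩ := AdjoinRoot.mk_surjective x
  rw [toZMod, AdjoinRoot.lift_mk, eval₂_at_one, eq_intCast,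
    ZMod.intCast_zmod_eq_zero_iff_dvd] at hx
  obtain ⟨m, hm⟩ := hx
  have hdvd_p : zeta p - 1 ∣ (p : CyclotomicIntegers p) := by
    simpa [eval_one_cyclotomic_prime] using zeta_sub_one_dvd_mk_sub_eval_one p (cyclotomic p ℤ)
  have hQ := zeta_sub_one_dvd_mk_sub_eval_one p Q
  rw [hm] at hQ
  simpa using hQ.add (hdvd_p.mul_right m)

theorem not_isUnit_zeta_sub_one : ¬IsUnit (zeta p - 1) := fun h => by
  simpa using h.map (toZMod p)

end Reduction

section Embedding

variable {p} {K : Type*} [Field K] {ζ : K} [NeZero p]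

def toField (hζ : IsPrimitiveRoot ζ p) : CyclotomicIntegers p →+* K :=
  AdjoinRoot.lift (Int.castRingHom K) ζ (by
    rw [eval₂_eq_eval_map, map_cyclotomic]
    exact hζ.isRoot_cyclotomic (NeZero.pos p))

@[simp]
theorem toField_zeta (hζ : IsPrimitiveRoot ζ p) : toField hζ (zeta p) = ζ :=
  AdjoinRoot.lift_root _

theorem toField_injective [CharZero K] (hζ : IsPrimitiveRoot ζ p) :
    Function.Injective (toField hζ) := by
  refine (injective_iff_map_eq_zero _).mpr fun x hx => ?_
  obtain ⟨Q, rfl⟩ := AdjoinRoot.mk_surjective x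
  rw [toField, AdjoinRoot.lift_mk, ← algebraMap_int_eq, ← aeval_def] at hx
  rw [AdjoinRoot.mk_eq_zero, cyclotomic_eq_minpoly hζ (NeZero.pos p)]
  exact minpoly.isIntegrallyClosed_dvd (hζ.isIntegral (NeZero.pos p)) hx

variable (p) in
theorem isPrimitiveRoot_zeta : IsPrimitiveRoot (zeta p) p := by
  have hζ := Complex.isPrimitiveRoot_exp p (NeZero.ne p)
  rw [← toField_zeta hζ] at hζ
  exact hζ.of_map_of_injective (toField_injective _)

end Embedding

section Chebotarev

variable {p} [Fact p.Prime] {s : ℕ} {a b : Fin s → ℕ}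

theorem zeta_sub_one_dvd_of_vecMul_powMul_eq_zero
    (ha : Function.Injective fun i => (a i : ZMod p))
    (hb : Function.Injective fun j => (b j : ZMod p)) {c : Fin s → CyclotomicIntegers p}
    (hc : c ᵥ* powMul (zeta p) a b = 0) (i : Fin s) : zeta p - 1 ∣ c i := by
  have hdvd : ∏ j, (X - C (zeta p ^ b j)) ∣ ∑ i, C (c i) * X ^ a i :=
    prod_X_sub_C_dvd_of_forall_isRoot ((isPrimitiveRoot_zeta p).injective_pow_comp hb) fun j => by
      rw [IsRoot, ← vecMul_powMul_apply, hc, Pi.zero_apply]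
  have hprod : (∏ j, (X - C (zeta p ^ b j))).map (toZMod p) = (X - 1) ^ s := by
    simp [Polynomial.map_prod]
  have hsum : (∑ i, C (c i) * X ^ a i).map (toZMod p) = ∑ i, C (toZMod p (c i)) * X ^ a i := by
    simp [Polynomial.map_sum]
  have hdvd_mod := Polynomial.map_dvd (toZMod p) hdvd
  rw [hprod, hsum] at hdvd_mod
  exact zeta_sub_one_dvd_of_toZMod_eq_zero p
    (congrFun (eq_zero_of_X_sub_one_pow_dvd_sum_C_mul_X_pow ha hdvd_mod) i)

theorem eq_zero_of_vecMul_powMul_eq_zero (ha : Function.Injective fun i => (a i : ZMod p))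
    (hb : Function.Injective fun j => (b j : ZMod p)) {c : Fin s → CyclotomicIntegers p}
    (hc : c ᵥ* powMul (zeta p) a b = 0) : c = 0 := by
  have hζ : zeta p - 1 ≠ 0 :=
    sub_ne_zero.mpr ((isPrimitiveRoot_zeta p).ne_one (Fact.out : p.Prime).one_lt)
  have hpow : ∀ k (c : Fin s → CyclotomicIntegers p), c ᵥ* powMul (zeta p) a b = 0 →
      ∀ i, c i ∈ Ideal.span {zeta p - 1} ^ k := by
    intro k
    induction k with
    | zero => simp
    | succ k ih =>
      intro c hc i
      choose c' hc' using zeta_sub_one_dvd_of_vecMul_powMul_eq_zero ha hb hc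
      have hc_eq : c = (zeta p - 1) • c' := funext hc'
      have hc'0 : c' ᵥ* powMul (zeta p) a b = 0 := by
        rw [hc_eq, smul_vecMul] at hc
        exact (smul_eq_zero.mp hc).resolve_left hζ
      rw [hc_eq, pow_succ', Pi.smul_apply, smul_eq_mul]
      exact Ideal.mul_mem_mul (Ideal.mem_span_singleton_self _) (ih c' hc'0 i)
  have hKrull := Ideal.iInf_pow_eq_bot_of_isDomain (Ideal.span {zeta p - 1})
    (by rw [Ne, Ideal.span_singleton_eq_top]; exact not_isUnit_zeta_sub_one p)
  funext i
  simpa [← Ideal.mem_bot, ← hKrull, Ideal.mem_iInf] using fun k => hpow k c hc i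

theorem det_powMul_zeta_ne_zero (ha : Function.Injective fun i => (a i : ZMod p))
    (hb : Function.Injective fun j => (b j : ZMod p)) : (powMul (zeta p) a b).det ≠ 0 := by
  intro h
  obtain ⟨c, hc0, hc⟩ := Matrix.exists_vecMul_eq_zero_iff.mpr h
  exact hc0 (eq_zero_of_vecMul_powMul_eq_zero ha hb hc)

end Chebotarev

end CyclotomicIntegers

end

theorem IsPrimitiveRoot.det_powMul_ne_zero {K : Type*} [Field K] [CharZero K] {p : ℕ}
    [Fact p.Prime] {ζ : K} (hζ : IsPrimitiveRoot ζ p) {s : ℕ} {a b : Fin s → ℕ}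
    (ha : Function.Injective fun i => (a i : ZMod p))
    (hb : Function.Injective fun j => (b j : ZMod p)) : (powMul ζ a b).det ≠ 0 := by
  rw [← CyclotomicIntegers.toField_zeta hζ, ← RingHom.mapMatrix_powMul, ← RingHom.map_det]
  exact (map_ne_zero_iff _ (CyclotomicIntegers.toField_injective hζ)).mpr
    (CyclotomicIntegers.det_powMul_zeta_ne_zero ha hb)

theorem IsPrimitiveRoot.eq_zero_of_card_support_le {K : Type*} [Field K] [CharZero K] {p : ℕ}
    [Fact p.Prime] {ζ : K} (hζ : IsPrimitiveRoot ζ p) {f : K[X]} (hdeg : f.natDegree < p)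
    {T : Finset K} (hT : ∀ z ∈ T, z ^ p = 1 ∧ f.IsRoot z)
    (hcard : f.support.card ≤ T.card) : f = 0 := by
  classical
  obtain ⟨T', hT'T, hT'card⟩ := Finset.exists_subset_card_eq hcard
  set s := f.support.card
  let a : Fin s → ℕ := fun i => f.support.equivFin.symm i
  let e : Fin s ≃ T' := (T'.equivFin.trans (finCongr hT'card)).symm
  let w : Fin s → K := fun j => e j
  have hw : ∀ j, w j ^ p = 1 ∧ f.IsRoot (w j) := fun j => hT _ (hT'T (Subtype.prop _))
  choose b hbp hbw using fun j => hζ.eq_pow_of_pow_eq_one (hw j).1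
  have ha : Function.Injective fun i => (a i : ZMod p) :=
    ZMod.injective_natCast_comp (fun i j h => f.support.equivFin.symm.injective (Subtype.ext h))
      fun i => (le_natDegree_of_mem_supp _ (Subtype.prop _)).trans_lt hdeg
  have hb : Function.Injective fun j => (b j : ZMod p) := by
    refine ZMod.injective_natCast_comp (fun j j' h => ?_) hbp
    have hww : w j = w j' := by rw [← hbw, ← hbw, h]
    exact e.injective (Subtype.ext hww)
  have hsum : ∑ i, C (f.coeff (a i)) * X ^ a i = f := by
    conv_rhs => rw [f.as_sum_support_C_mul_X_pow, ← Finset.sum_coe_sort]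
    exact Equiv.sum_comp f.support.equivFin.symm fun n => C (f.coeff n) * X ^ (n : ℕ)
  have hc : (fun i => f.coeff (a i)) ᵥ* powMul ζ a b = 0 := funext fun j => by
    rw [vecMul_powMul_apply, hsum, hbw]
    exact (hw j).2
  have hc0 := Matrix.eq_zero_of_vecMul_eq_zero (hζ.det_powMul_ne_zero ha hb) hc
  refine Polynomial.support_eq_empty.mp (Finset.eq_empty_of_forall_notMem fun n hn => ?_)
  have hcoeff := congrFun hc0 (f.support.equivFin ⟨n, hn⟩)
  simp only [a, Equiv.symm_apply_apply, Pi.zero_apply] at hcoeff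
  exact mem_support_iff.mp hn hcoeff

/-- for a prime `d` and a nonzero polynomial `f ∈ ℂ[X]` of
degree less than `d`, the number of `d`-th roots of unity that are roots of
`f` is at most `δ(f) - 1`, where `δ(f)` is the number of nonzero coefficients
of `f`. -/
theorem stmt18 (d : ℕ) (hd : d.Prime) (f : Polynomial ℂ) (hf : f ≠ 0)
    (hdeg : f.natDegree < d) :
    {z : ℂ | z ^ d = 1 ∧ Polynomial.eval z f = 0}.ncard ≤
      f.support.card - 1 := by
  classical
  have := Fact.mk hd
  set T := (nthRootsFinset d (1 : ℂ)).filter fun z => f.eval z = 0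
  have hT : {z : ℂ | z ^ d = 1 ∧ Polynomial.eval z f = 0} = T := by
    ext z
    simp [T, mem_nthRootsFinset hd.pos]
  rw [hT, Set.ncard_coe_finset]
  by_contra! hcard
  refine hf ((Complex.isPrimitiveRoot_exp d hd.ne_zero).eq_zero_of_card_support_le hdeg
    (fun z hz => ?_) (show f.support.card ≤ T.card by omega))
  simpa [T, mem_nthRootsFinset hd.pos] using hz
end

section
/- Let d be an odd prime. There is no unit vector g ∈ ℂ^d with d < rank(G(g)) < 2d. -/
/-!
Write `A(k, ℓ) = ⟨g, M^k T^ℓ g⟩` for the ambiguity function of `g` and `S` for its support in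
`(ℤ/dℤ)²`. The Gram matrix is the group-circulant matrix of `|A|²`, and the Fourier transform
of `ν ↦ A(ν) · conj A(ν - c)` is, up to a phase and a factor `d`, the same function at a
rotated point. For `c = 0` this gives `rank G(g) = |S|`; for general `c` it combines with the
Donoho–Stark uncertainty principle to give `|S ∩ (S + c)| ≥ d` whenever the intersection is
nonempty.

If `d < |S| < 2d`, any two such intersections meet inside `S`, so `S - S` is closed under
subtraction: a subgroup with more than `d` elements of a group of order `d²`, hence everything.
Counting pairs, `|S|² = ∑_c |S ∩ (S + c)| ≥ d³`, which is impossible for `|S| ≤ 2d - 1` and `d ≥ 3`.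
-/

open Complex Finset

noncomputable section

/-- `gw d` is the primitive `d`-th root of unity `ω = exp(2πi/d)`. -/
def gw (d : ℕ) : ℂ := Complex.exp (2 * Real.pi * Complex.I / d)

/-- `modT d k l g = M^k T^ℓ g`, where `(Mg)_n = ω^n g_n` and `(Tg)_n = g_{n-1}`. -/
def modT (d : ℕ) (k l : ZMod d) (g : ZMod d → ℂ) : ZMod d → ℂ :=
  fun n => gw d ^ (k.val * n.val) * g (n - l)

/-- `inn d x y = ⟨x,y⟩ = Σ_n x_n conj(y_n)`. -/
def inn (d : ℕ) [NeZero d] (x y : ZMod d → ℂ) : ℂ :=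
  ∑ n : ZMod d, x n * (starRingEnd ℂ) (y n)

/-- The `d² × d²` Gram matrix `G(g)` with entries `|⟨M^k T^ℓ g, M^{k'} T^{ℓ'} g⟩|²`. -/
def Gmat (d : ℕ) [NeZero d] (g : ZMod d → ℂ) :
    Matrix (ZMod d × ZMod d) (ZMod d × ZMod d) ℂ :=
  fun p q =>
    ((‖inn d (modT d p.1 p.2 g) (modT d q.1 q.2 g)‖ ^ 2 : ℝ) : ℂ)

open ZMod ComplexConjugate Matrix
open scoped Pointwise

namespace Finset

variable {G : Type*} [AddCommGroup G]

lemma sub_mem_sub_of_card_filter [DecidableEq G] {S : Finset G} {p : ℕ} (hS : #S < 2 * p)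
    (hrep : ∀ c ∈ S - S, p ≤ #{x ∈ S | x - c ∈ S}) {c c' : G} (hc : c ∈ S - S)
    (hc' : c' ∈ S - S) : c - c' ∈ S - S := by
  have hmeet : ¬ Disjoint {x ∈ S | x - c ∈ S} {x ∈ S | x - c' ∈ S} := by
    intro h
    have := card_union_of_disjoint h ▸ card_le_card
      (union_subset (filter_subset _ S) (filter_subset _ S))
    linarith [hrep c hc, hrep c' hc']
  obtain ⟨x, hx, hx'⟩ := not_disjoint_iff.mp hmeet
  rw [mem_filter] at hx hx'
  exact mem_sub.mpr ⟨x - c', hx'.2, x - c, hx.2, by abel⟩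

variable [Fintype G]

lemma sum_card_filter_sub_mem [DecidableEq G] (S : Finset G) :
    ∑ c, #{x ∈ S | x - c ∈ S} = #S ^ 2 := by
  have hfiber (x : G) : #{c | x - c ∈ S} = #S :=
    card_equiv (Equiv.subLeft x) (by simp)
  calc ∑ c, #{x ∈ S | x - c ∈ S}
      = ∑ x ∈ S, #{c | x - c ∈ S} := by
        simp only [card_filter]; exact sum_comm
    _ = #S ^ 2 := by simp [hfiber, sq]

lemma eq_univ_of_sub_mem_of_card_lt {p : ℕ} (hp : p.Prime) (hG : Fintype.card G = p ^ 2)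
    {D : Finset G} (hD : D.Nonempty) (hsub : ∀ x ∈ D, ∀ y ∈ D, x - y ∈ D)
    (hcard : p < #D) : D = univ := by
  let H : AddSubgroup G := .ofSub D hD fun x hx y hy => by
    simpa [sub_eq_add_neg] using hsub x hx y hy
  have hdvd : #D ∣ p ^ 2 := by
    simpa [H, AddSubgroup.ofSub, hG] using H.card_addSubgroup_dvd_card
  obtain ⟨k, hk, hDk⟩ := (Nat.dvd_prime_pow hp).mp hdvd
  have : 1 < k := (Nat.pow_lt_pow_iff_right hp.one_lt).mp (by rwa [pow_one, ← hDk])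
  exact eq_univ_of_card D (by rw [hDk, hG, show k = 2 by omega])

lemma not_lt_card_of_le_card_filter_sub_mem [DecidableEq G] {p : ℕ} (hp : p.Prime)
    (hp3 : 3 ≤ p) (hG : Fintype.card G = p ^ 2) {S : Finset G}
    (hrep : ∀ c ∈ S - S, p ≤ #{x ∈ S | x - c ∈ S}) : ¬ (p < #S ∧ #S < 2 * p) := by
  rintro ⟨hpS, hS⟩
  have hSS : S - S = univ := by
    refine eq_univ_of_sub_mem_of_card_lt hp hG ?_ (fun c hc c' hc' => ?_)
      (hpS.trans_le card_le_card_sub_self)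
    · exact (card_pos.mp (by omega)).sub (card_pos.mp (by omega))
    · exact sub_mem_sub_of_card_filter hS hrep hc hc'
  have hcube : p * p ^ 2 ≤ #S ^ 2 := by
    calc p * p ^ 2 = ∑ _c : G, p := by simp [hG, mul_comm]
      _ ≤ ∑ c, #{x ∈ S | x - c ∈ S} := sum_le_sum fun c _ => hrep c (hSS ▸ mem_univ c)
      _ = #S ^ 2 := sum_card_filter_sub_mem S
  obtain ⟨q, rfl⟩ : ∃ q, p = q + 3 := ⟨p - 3, by omega⟩
  have hS' : #S ≤ 2 * q + 5 := by omega
  nlinarith [Nat.mul_le_mul hS' hS']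

end Finset

lemma sum_norm_le_card_support_mul {ι E : Type*} [Fintype ι] [NormedAddCommGroup E]
    [DecidableEq E] (f : ι → E) {B : ℝ} (hB : ∀ i, ‖f i‖ ≤ B) :
    ∑ i, ‖f i‖ ≤ #{i | f i ≠ 0} * B := by
  rw [← sum_filter_of_ne (p := fun i => f i ≠ 0) fun i _ h => by simpa using h]
  simpa using sum_le_card_nsmul _ _ B fun i _ => hB i

section Fourier

variable {d : ℕ} [NeZero d]

lemma sum_stdAddChar_mul (t : ZMod d) :
    ∑ k : ZMod d, (stdAddChar (k * t) : ℂ) = if t = 0 then (d : ℂ) else 0 := by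
  rw [AddChar.sum_mulShift t (isPrimitive_stdAddChar d), ZMod.card]
  split_ifs <;> simp

lemma sum_sum_mul_stdAddChar_mul_sub (F : ZMod d → ℂ) (x : ZMod d) :
    ∑ k, ∑ n, F n * stdAddChar (k * (x - n)) = d * F x := by
  rw [sum_comm]
  simp_rw [← mul_sum, sum_stdAddChar_mul, sub_eq_zero, mul_ite, mul_zero, sum_ite_eq]
  simp [mul_comm]

lemma sum_stdAddChar_dot (x : ZMod d × ZMod d) :
    ∑ μ : ZMod d × ZMod d, (stdAddChar (μ.1 * x.1 + μ.2 * x.2) : ℂ)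
      = if x = 0 then (d : ℂ) ^ 2 else 0 := by
  simp_rw [Fintype.sum_prod_type, AddChar.map_add_eq_mul, ← mul_sum, ← sum_mul,
    sum_stdAddChar_mul, Prod.ext_iff]
  split_ifs <;> simp_all [sq]

def dft2 (f : ZMod d × ZMod d → ℂ) (μ : ZMod d × ZMod d) : ℂ :=
  ∑ ν, f ν * stdAddChar (μ.1 * ν.1 + μ.2 * ν.2)

lemma sum_dft2_mul_stdAddChar (f : ZMod d × ZMod d → ℂ) (ν : ZMod d × ZMod d) :
    ∑ μ, dft2 f μ * stdAddChar (-(μ.1 * ν.1 + μ.2 * ν.2)) = d ^ 2 * f ν := by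
  have hphase (μ ρ : ZMod d × ZMod d) :
      (stdAddChar (μ.1 * ρ.1 + μ.2 * ρ.2) * stdAddChar (-(μ.1 * ν.1 + μ.2 * ν.2)) : ℂ)
        = stdAddChar (μ.1 * (ρ - ν).1 + μ.2 * (ρ - ν).2) := by
    rw [← AddChar.map_add_eq_mul]; congr 1; simp only [Prod.fst_sub, Prod.snd_sub]; ring
  simp_rw [dft2, sum_mul, mul_assoc, hphase]
  rw [sum_comm]
  simp_rw [← mul_sum, sum_stdAddChar_dot, sub_eq_zero, mul_ite, mul_zero, sum_ite_eq']
  simp [mul_comm]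

lemma norm_dft2_le (f : ZMod d × ZMod d → ℂ) (μ : ZMod d × ZMod d) :
    ‖dft2 f μ‖ ≤ ∑ ν, ‖f ν‖ :=
  (norm_sum_le _ _).trans_eq (by simp [AddChar.norm_apply])

/-- The Donoho–Stark uncertainty principle on `(ℤ/dℤ)²`. -/
lemma sq_le_card_support_mul_card_support_dft2 {f : ZMod d × ZMod d → ℂ} (hf : f ≠ 0) :
    d ^ 2 ≤ #{ν | f ν ≠ 0} * #{μ | dft2 f μ ≠ 0} := by
  obtain ⟨ν₀, -, hν₀⟩ := exists_max_image univ (fun ν => ‖f ν‖) univ_nonempty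
  have hM : 0 < ‖f ν₀‖ := by
    obtain ⟨ν, hν⟩ := Function.ne_iff.mp hf
    exact (norm_pos_iff.mpr hν).trans_le (hν₀ ν (mem_univ ν))
  have hbound : (d : ℝ) ^ 2 * ‖f ν₀‖ ≤ #{ν | f ν ≠ 0} * #{μ | dft2 f μ ≠ 0} * ‖f ν₀‖ := by
    calc (d : ℝ) ^ 2 * ‖f ν₀‖
        = ‖∑ μ, dft2 f μ * stdAddChar (-(μ.1 * ν₀.1 + μ.2 * ν₀.2))‖ := by
          rw [sum_dft2_mul_stdAddChar]; simp
      _ ≤ ∑ μ, ‖dft2 f μ‖ := (norm_sum_le _ _).trans_eq (by simp [AddChar.norm_apply])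
      _ ≤ #{μ | dft2 f μ ≠ 0} * ∑ ν, ‖f ν‖ := sum_norm_le_card_support_mul _ (norm_dft2_le f)
      _ ≤ #{μ | dft2 f μ ≠ 0} * (#{ν | f ν ≠ 0} * ‖f ν₀‖) := by
          gcongr; exact sum_norm_le_card_support_mul _ fun ν => hν₀ ν (mem_univ ν)
      _ = _ := by ring
  exact_mod_cast le_of_mul_le_mul_right hbound hM

def charMatrix (d : ℕ) [NeZero d] : Matrix (ZMod d × ZMod d) (ZMod d × ZMod d) ℂ :=
  Matrix.of fun μ ν => stdAddChar (μ.1 * ν.1 + μ.2 * ν.2)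

lemma charMatrix_mul_conjTranspose : charMatrix d * (charMatrix d)ᴴ = ((d : ℂ) ^ 2) • 1 := by
  ext ρ τ
  have hphase (μ : ZMod d × ZMod d) : charMatrix d ρ μ * (charMatrix d)ᴴ μ τ
      = stdAddChar (μ.1 * (ρ - τ).1 + μ.2 * (ρ - τ).2) := by
    simp only [charMatrix, conjTranspose_apply, of_apply, RCLike.star_def,
      ← AddChar.map_neg_eq_conj, ← AddChar.map_add_eq_mul, Prod.fst_sub, Prod.snd_sub]
    congr 1; ring
  simp_rw [mul_apply, hphase, sum_stdAddChar_dot, sub_eq_zero, Matrix.smul_apply, one_apply,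
    smul_eq_mul, mul_ite, mul_one, mul_zero]

lemma isUnit_det_charMatrix : IsUnit (charMatrix d).det :=
  isUnit_det_of_right_inverse (B := ((d : ℂ) ^ 2)⁻¹ • (charMatrix d)ᴴ) (by
    rw [Matrix.mul_smul, charMatrix_mul_conjTranspose, smul_smul,
      inv_mul_cancel₀ (by simp [NeZero.ne d]), one_smul])

lemma circulant_eq_charMatrix_mul (f : ZMod d × ZMod d → ℂ) :
    Matrix.of (fun ρ τ => f (τ - ρ)) = charMatrix d *
      diagonal (fun μ => ((d : ℂ) ^ 2)⁻¹ * dft2 f μ) * (charMatrix d)ᴴ := by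
  ext ρ τ
  have hd : (d : ℂ) ^ 2 ≠ 0 := by simp [NeZero.ne d]
  have hphase (μ : ZMod d × ZMod d) : (charMatrix d ρ μ * (charMatrix d)ᴴ μ τ : ℂ)
      = stdAddChar (-(μ.1 * (τ - ρ).1 + μ.2 * (τ - ρ).2)) := by
    simp only [charMatrix, conjTranspose_apply, of_apply, RCLike.star_def,
      ← AddChar.map_neg_eq_conj, ← AddChar.map_add_eq_mul, Prod.fst_sub, Prod.snd_sub]
    congr 1; ring
  rw [of_apply, mul_apply, ← inv_mul_cancel_left₀ hd (f (τ - ρ)),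
    ← sum_dft2_mul_stdAddChar, mul_sum]
  refine sum_congr rfl fun μ _ => ?_
  rw [mul_diagonal, ← hphase]
  ring

lemma rank_circulant (f : ZMod d × ZMod d → ℂ) :
    (Matrix.of fun ρ τ => f (τ - ρ)).rank = #{μ | dft2 f μ ≠ 0} := by
  have hd : (d : ℂ) ^ 2 ≠ 0 := by simp [NeZero.ne d]
  rw [circulant_eq_charMatrix_mul, rank_mul_eq_left_of_isUnit_det _ _
      (by simpa [det_conjTranspose] using isUnit_det_charMatrix.star),
    rank_mul_eq_right_of_isUnit_det _ _ isUnit_det_charMatrix, rank_diagonal,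
    Fintype.card_subtype]
  simp [hd]

end Fourier

section Ambiguity

variable {d : ℕ} [NeZero d]

lemma gw_pow_eq_stdAddChar (m : ℕ) : gw d ^ m = stdAddChar (m : ZMod d) := by
  rw [gw, ← Complex.exp_nat_mul, stdAddChar_apply, toCircle_natCast]
  congr 1; ring

lemma modT_apply (k l : ZMod d) (g : ZMod d → ℂ) (n : ZMod d) :
    modT d k l g n = stdAddChar (k * n) * g (n - l) := by
  rw [modT, gw_pow_eq_stdAddChar, Nat.cast_mul, natCast_zmod_val, natCast_zmod_val]

/-- The ambiguity function `ν ↦ ⟨g, M^{ν.1} T^{ν.2} g⟩`. -/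
def amb (g : ZMod d → ℂ) (ν : ZMod d × ZMod d) : ℂ :=
  ∑ n, g n * conj (g (n - ν.2)) * stdAddChar (-(ν.1 * n))

def ambSupport (g : ZMod d → ℂ) : Finset (ZMod d × ZMod d) := {ν | amb g ν ≠ 0}

def ambProd (g : ZMod d → ℂ) (c ν : ZMod d × ZMod d) : ℂ :=
  amb g ν * conj (amb g (ν - c))

lemma conj_amb (g : ZMod d → ℂ) (ν : ZMod d × ZMod d) :
    conj (amb g ν) = ∑ n, conj (g n) * g (n - ν.2) * stdAddChar (ν.1 * n) := by
  simp only [amb, map_sum, map_mul, conj_conj, ← AddChar.map_neg_eq_conj, neg_neg]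

lemma inn_modT (g : ZMod d → ℂ) (k l k' l' : ZMod d) :
    inn d (modT d k l g) (modT d k' l' g)
      = stdAddChar ((k - k') * l) * amb g (k' - k, l' - l) := by
  rw [inn, amb, mul_sum]
  refine Fintype.sum_equiv (Equiv.subRight l) _ _ fun n => ?_
  have hphase : (stdAddChar (k * n) * conj (stdAddChar (k' * n)) : ℂ)
      = stdAddChar ((k - k') * l) * stdAddChar (-((k' - k) * (n - l))) := by
    simp only [← AddChar.map_neg_eq_conj, ← AddChar.map_add_eq_mul]; congr 1; ring
  simp only [modT_apply, Equiv.subRight_apply, map_mul, sub_sub_sub_cancel_right]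
  linear_combination (g (n - l) * conj (g (n - l'))) * hphase

lemma Gmat_eq_circulant (g : ZMod d → ℂ) :
    Gmat d g = Matrix.of fun ρ τ => ambProd g 0 (τ - ρ) := by
  ext ρ τ
  rw [Gmat, inn_modT, norm_mul, AddChar.norm_apply, one_mul, of_apply, ambProd, sub_zero,
    mul_conj, normSq_eq_norm_sq]
  rfl

lemma sum_amb_mul_conj_amb (g : ZMod d → ℂ) (a l c₁ c₂ : ZMod d) :
    ∑ k, amb g (k, l) * conj (amb g (k - c₁, l - c₂)) * stdAddChar (a * k)
      = d * ∑ m, g (m + a) * conj (g (m + a - l)) * conj (g m) * g (m - (l - c₂))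
          * stdAddChar (-(c₁ * m)) := by
  have hexpand (k : ZMod d) : amb g (k, l) * conj (amb g (k - c₁, l - c₂)) * stdAddChar (a * k)
      = ∑ m, ∑ n, g n * conj (g (n - l)) * conj (g m) * g (m - (l - c₂))
          * stdAddChar (-(c₁ * m)) * stdAddChar (k * (m + a - n)) := by
    rw [amb, conj_amb, sum_mul_sum, sum_mul]
    simp_rw [sum_mul]
    rw [sum_comm]
    refine sum_congr rfl fun m _ => sum_congr rfl fun n _ => ?_
    have hphase : (stdAddChar (-(k * n)) * stdAddChar ((k - c₁) * m) * stdAddChar (a * k) : ℂ)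
        = stdAddChar (-(c₁ * m)) * stdAddChar (k * (m + a - n)) := by
      simp only [← AddChar.map_add_eq_mul]; congr 1; ring
    linear_combination (g n * conj (g (n - l)) * conj (g m) * g (m - (l - c₂))) * hphase
  simp_rw [hexpand]
  rw [sum_comm, mul_sum]
  exact sum_congr rfl fun m _ => sum_sum_mul_stdAddChar_mul_sub _ _

/-- Self-duality of ambiguity functions under the Fourier transform, twisted by a shift `c`. -/
lemma dft2_ambProd (g : ZMod d → ℂ) (c μ : ZMod d × ZMod d) :
    dft2 (ambProd g c) μ = d * stdAddChar (μ.1 * c.1) * ambProd g c (c.1 - μ.2, μ.1) := by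
  obtain ⟨a, b⟩ := μ
  obtain ⟨c₁, c₂⟩ := c
  have hslices : dft2 (ambProd g (c₁, c₂)) (a, b)
      = ∑ l, stdAddChar (b * l) * ∑ k, amb g (k, l) * conj (amb g (k - c₁, l - c₂))
          * stdAddChar (a * k) := by
    rw [dft2, Fintype.sum_prod_type, sum_comm]
    refine sum_congr rfl fun l _ => ?_
    rw [mul_sum]
    refine sum_congr rfl fun k _ => ?_
    simp only [ambProd, Prod.mk_sub_mk, AddChar.map_add_eq_mul]
    ring
  have hreindex (F : ZMod d → ZMod d → ℂ) :
      ∑ n, ∑ j, F n j = ∑ m, ∑ l, F (m + a) (m + a - l) :=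
    (Fintype.sum_equiv (Equiv.addRight a) _ _ fun m =>
      Fintype.sum_equiv (Equiv.subLeft (m + a)) _ _ fun _ => rfl).symm
  rw [hslices]
  simp_rw [sum_amb_mul_conj_amb, mul_sum]
  rw [sum_comm]
  conv_rhs => rw [ambProd, amb, conj_amb, sum_mul_sum, hreindex]
  simp_rw [mul_sum]
  refine sum_congr rfl fun m _ => sum_congr rfl fun l _ => ?_
  simp only [Prod.mk_sub_mk]
  rw [show m + a - a = m by ring, show m + a - l - (a - c₂) = m - (l - c₂) by ring]
  have hphase : (stdAddChar (b * l) * stdAddChar (-(c₁ * m)) : ℂ)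
      = stdAddChar (a * c₁) * stdAddChar (-((c₁ - b) * (m + a)))
        * stdAddChar ((c₁ - b - c₁) * (m + a - l)) := by
    simp only [← AddChar.map_add_eq_mul]; congr 1; ring
  linear_combination
    (d * g (m + a) * conj (g (m + a - l)) * conj (g m) * g (m - (l - c₂))) * hphase

lemma card_support_dft2_ambProd (g : ZMod d → ℂ) (c : ZMod d × ZMod d) :
    #{μ | dft2 (ambProd g c) μ ≠ 0} = #{ν | ambProd g c ν ≠ 0} := by
  let rot : ZMod d × ZMod d ≃ ZMod d × ZMod d :=
    { toFun := fun μ => (c.1 - μ.2, μ.1)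
      invFun := fun ν => (ν.2, c.1 - ν.1)
      left_inv := fun μ => by simp
      right_inv := fun ν => by simp }
  refine card_equiv rot fun μ => ?_
  simp [rot, dft2_ambProd, NeZero.ne d, stdAddChar_apply, Circle.coe_ne_zero]

lemma le_card_support_ambProd (g : ZMod d → ℂ) {c : ZMod d × ZMod d} (hc : ambProd g c ≠ 0) :
    d ≤ #{ν | ambProd g c ν ≠ 0} := by
  have := sq_le_card_support_mul_card_support_dft2 hc
  rw [card_support_dft2_ambProd, ← sq] at this
  exact (Nat.pow_le_pow_iff_left two_ne_zero).mp this

lemma rank_Gmat (g : ZMod d → ℂ) : (Gmat d g).rank = #(ambSupport g) := by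
  rw [Gmat_eq_circulant, rank_circulant, card_support_dft2_ambProd, ambSupport]
  simp [ambProd]

lemma le_card_filter_sub_mem_ambSupport (g : ZMod d → ℂ) {c : ZMod d × ZMod d}
    (hc : c ∈ ambSupport g - ambSupport g) :
    d ≤ #{x ∈ ambSupport g | x - c ∈ ambSupport g} := by
  have hfilter :
      {x ∈ ambSupport g | x - c ∈ ambSupport g} = ({ν | ambProd g c ν ≠ 0} : Finset _) := by
    ext ν; simp [ambSupport, ambProd]
  obtain ⟨x, hx, y, hy, rfl⟩ := mem_sub.mp hc
  rw [hfilter]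
  exact le_card_support_ambProd g (Function.ne_iff.mpr ⟨x, by simp_all [ambSupport, ambProd]⟩)

end Ambiguity

/-- for an odd prime `d`, no unit vector `g ∈ ℂ^d` has
`d < rank G(g) < 2d`. -/
theorem stmt19 (d : ℕ) [NeZero d] (hp : d.Prime) (hodd : Odd d) :
    ¬ ∃ g : ZMod d → ℂ,
      (∑ n : ZMod d, ‖g n‖ ^ 2 = 1) ∧
      d < (Gmat d g).rank ∧ (Gmat d g).rank < 2 * d := by
  rintro ⟨g, -, hrank⟩
  have hd3 : 3 ≤ d := by
    obtain ⟨k, rfl⟩ := hodd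
    have := hp.two_le
    omega
  rw [rank_Gmat] at hrank
  exact Finset.not_lt_card_of_le_card_filter_sub_mem hp hd3 (by simp [ZMod.card, sq])
    (fun c hc => le_card_filter_sub_mem_ambSupport g hc) hrank
end
end
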